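/- Let a and n be positive integers with a ≥ 2. Then the rational number a^{n−1}·G_{n,a} is an integer; that is, the denominator of G_{n,a} divides a^{n−1}. -/

import Mathlib

/-- The generalized Genocchi numbers `G_{n,a}`:
`G n a = n! * (n-th coefficient of (a : ℚ) • X * (∑_{j=0}^{a-1} rescale j (exp ℚ))⁻¹)`. -/
noncomputable def genGenocchi (n a : ℕ) : ℚ :=
  (Nat.factorial n : ℚ) * PowerSeries.coeff (R := ℚ) n
    ((a : ℚ) • (PowerSeries.X * (∑ j ∈ Finset.range a, PowerSeries.rescale (j : ℚ) (PowerSeries.exp ℚ))⁻¹))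

open Finset PowerSeries

lemma exists_int_factorial_mul_bernoulli :
    ∀ k : ℕ, ∃ b : ℤ, (((k+1).factorial : ℕ) : ℚ) * bernoulli k = b := by
  intro k
  induction k using Nat.strong_induction_on with
  | _ k ih =>
    choose f hf using ih
    rcases Nat.eq_zero_or_pos k with rfl | hk
    · exact ⟨1, by simp⟩
    · refine ⟨-∑ i ∈ (range k).attach,
        ((k.factorial / (i.1+1).factorial : ℕ) : ℤ) * ((k+1).choose i.1) * f i.1 (mem_range.mp i.2), ?_⟩
      have hsum := sum_bernoulli (k+1)
      rw [if_neg (by omega)] at hsum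
      rw [Finset.sum_range_succ] at hsum
      have hchoose : ((k+1).choose k : ℚ) = (k+1 : ℚ) := by
        rw [Nat.choose_succ_self_right]; push_cast; ring
      have hBk : ((k:ℚ)+1) * bernoulli k = -∑ i ∈ range k, ((k+1).choose i : ℚ) * bernoulli i := by
        rw [hchoose] at hsum; linarith [hsum]
      have hfact : ((k+1).factorial : ℚ) = (k.factorial : ℚ) * ((k:ℚ)+1) := by
        rw [Nat.factorial_succ]; push_cast; ring
      have key : (((k+1).factorial : ℕ) : ℚ) * bernoulli k
          = -∑ i ∈ (range k).attach, ((k.factorial / (i.1+1).factorial : ℕ) : ℚ)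
              * ((k+1).choose i.1 : ℚ) * ((f i.1 (mem_range.mp i.2) : ℤ) : ℚ) := by
        rw [hfact, mul_assoc, hBk,
          ← Finset.sum_attach (range k) (fun i => ((k+1).choose i : ℚ) * bernoulli i),
          mul_neg, Finset.mul_sum, neg_inj]
        refine Finset.sum_congr rfl fun i _ => ?_
        have hi : i.1 < k := mem_range.mp i.2
        have hdvd : (i.1+1).factorial ∣ k.factorial := Nat.factorial_dvd_factorial (by omega)
        have h2 : ((k.factorial / (i.1+1).factorial : ℕ) : ℚ) * ((i.1+1).factorial : ℚ)
            = (k.factorial : ℚ) := by exact_mod_cast congrArg (Nat.cast : ℕ → ℚ) (Nat.div_mul_cancel hdvd)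
        rw [← hf i.1 hi, ← h2]
        ring
      rw [key, Int.cast_neg, Int.cast_sum, neg_inj]
      exact Finset.sum_congr rfl fun i _ => by
        rw [Int.cast_mul, Int.cast_mul, Int.cast_natCast, Int.cast_natCast]


lemma genGenocchi_eq (n a : ℕ) (ha : 0 < a) :
    genGenocchi n a = ∑ k ∈ range n, (n.choose k : ℚ) * (a : ℚ)^k * bernoulli k := by
  classical
  set S : PowerSeries ℚ := ∑ j ∈ range a, rescale (j : ℚ) (exp ℚ) with hSdef
  have hS : S = ∑ j ∈ range a, exp ℚ ^ j :=
    Finset.sum_congr rfl fun j _ => (exp_pow_eq_rescale_exp j).symm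
  have hconstv : constantCoeff S = (a : ℚ) := by
    rw [hS, map_sum]
    have : ∀ j ∈ range a, constantCoeff (exp ℚ ^ j) = 1 := by
      intro j _
      rw [map_pow, PowerSeries.constantCoeff_exp, one_pow]
    rw [Finset.sum_congr rfl this, Finset.sum_const, card_range, nsmul_eq_mul, mul_one]
  have hconst : constantCoeff S ≠ 0 := by
    rw [hconstv]
    exact_mod_cast Nat.pos_iff_ne_zero.mp ha
  have h1 : (exp ℚ - 1) * S = exp ℚ ^ a - 1 := by
    rw [hS, mul_comm, geom_sum_mul]
  have h2 : rescale (a : ℚ) (bernoulliPowerSeries ℚ) * (exp ℚ ^ a - 1) = C (a : ℚ) * X := by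
    rw [exp_pow_eq_rescale_exp]
    calc rescale (a:ℚ) (bernoulliPowerSeries ℚ) * (rescale (a:ℚ) (exp ℚ) - 1)
        = rescale (a:ℚ) (bernoulliPowerSeries ℚ * (exp ℚ - 1)) := by rw [map_mul, map_sub, map_one]
      _ = rescale (a:ℚ) X := by rw [bernoulliPowerSeries_mul_exp_sub_one]
      _ = C (a:ℚ) * X := rescale_X (a:ℚ)
  have key : (a:ℚ) • (X * S⁻¹) = (exp ℚ - 1) * rescale (a:ℚ) (bernoulliPowerSeries ℚ) := by
    calc (a:ℚ) • (X * S⁻¹) = C (a:ℚ) * (X * S⁻¹) := smul_eq_C_mul _ _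
      _ = (C (a:ℚ) * X) * S⁻¹ := (mul_assoc _ _ _).symm
      _ = (rescale (a:ℚ) (bernoulliPowerSeries ℚ) * (exp ℚ ^ a - 1)) * S⁻¹ := by rw [h2]
      _ = (rescale (a:ℚ) (bernoulliPowerSeries ℚ) * ((exp ℚ - 1) * S)) * S⁻¹ := by rw [h1]
      _ = ((exp ℚ - 1) * rescale (a:ℚ) (bernoulliPowerSeries ℚ)) * (S * S⁻¹) := by ring
      _ = (exp ℚ - 1) * rescale (a:ℚ) (bernoulliPowerSeries ℚ) := by
          rw [PowerSeries.mul_inv_cancel S hconst, mul_one]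
  have : genGenocchi n a
      = (n.factorial : ℚ) * coeff n (rescale (a:ℚ) (bernoulliPowerSeries ℚ) * (exp ℚ - 1)) := by
    rw [genGenocchi, ← hSdef, key, mul_comm (exp ℚ - 1)]
  rw [this, PowerSeries.coeff_mul, Finset.Nat.sum_antidiagonal_eq_sum_range_succ_mk,
    Finset.sum_range_succ]
  have hlast : (coeff n) (rescale (a:ℚ) (bernoulliPowerSeries ℚ)) * (coeff (n - n)) (exp ℚ - 1) = 0 := by
    have : (coeff (n - n)) (exp ℚ - 1) = 0 := by
      rw [Nat.sub_self, map_sub, PowerSeries.coeff_exp, PowerSeries.coeff_one, if_pos rfl]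
      simp
    rw [this, mul_zero]
  rw [hlast, add_zero, Finset.mul_sum]
  refine Finset.sum_congr rfl fun k hk => ?_
  have hk' : k < n := mem_range.mp hk
  have hco : (coeff k) (rescale (a:ℚ) (bernoulliPowerSeries ℚ)) = (a:ℚ)^k * (bernoulli k / k.factorial) := by
    rw [PowerSeries.coeff_rescale]
    simp [bernoulliPowerSeries, PowerSeries.coeff_mk]
  have hce : (coeff (n - k)) (exp ℚ - 1) = 1 / ((n-k).factorial : ℚ) := by
    rw [map_sub, PowerSeries.coeff_exp, PowerSeries.coeff_one, if_neg (by omega)]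
    simp
  rw [hco, hce, Nat.cast_choose ℚ (le_of_lt hk')]
  have h1 : (k.factorial : ℚ) ≠ 0 := by exact_mod_cast k.factorial_ne_zero
  have h2 : ((n-k).factorial : ℚ) ≠ 0 := by exact_mod_cast (n-k).factorial_ne_zero
  field_simp


private theorem key_arith (a n : ℕ) (ha : 2 ≤ a) (hn : 2 ≤ n) :
    ∃ m : ℤ, (a : ℚ) ^ (n - 1) * ∑ k ∈ range n, (n.choose k : ℚ) * (a : ℚ)^k * bernoulli k = (m : ℚ) := by
  classical
  choose bfun hb using exists_int_factorial_mul_bernoulli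
  set c : ℕ → ℤ := fun k => (n.choose k : ℤ) * ((n.factorial / (k+1).factorial : ℕ) : ℤ) * bfun k with hcdef
  have hc : ∀ k, k < n → (c k : ℚ) = (n.factorial : ℚ) * (n.choose k : ℚ) * bernoulli k := by
    intro k hk
    have hdvd : (k+1).factorial ∣ n.factorial := Nat.factorial_dvd_factorial (by omega)
    have h2 : ((n.factorial / (k+1).factorial : ℕ) : ℚ) * (((k+1).factorial : ℕ) : ℚ)
        = (n.factorial : ℚ) := by exact_mod_cast congrArg (Nat.cast : ℕ → ℚ) (Nat.div_mul_cancel hdvd)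
    show (((n.choose k : ℤ) * ((n.factorial / (k+1).factorial : ℕ) : ℤ) * bfun k : ℤ) : ℚ) = _
    rw [Int.cast_mul, Int.cast_mul, Int.cast_natCast, Int.cast_natCast, ← hb k, ← h2]
    ring
  set N : ℤ := ∑ k ∈ range n, c k * (a:ℤ)^(n-1+k) with hNdef
  have hNQ : (N : ℚ) = (n.factorial : ℚ) *
      ((a:ℚ)^(n-1) * ∑ k ∈ range n, (n.choose k : ℚ) * (a:ℚ)^k * bernoulli k) := by
    rw [hNdef, Int.cast_sum, Finset.mul_sum, Finset.mul_sum]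
    refine Finset.sum_congr rfl fun k hk => ?_
    rw [Int.cast_mul, Int.cast_pow, Int.cast_natCast, hc k (mem_range.mp hk), pow_add]
    ring
  -- divisibility of N by each prime power in n!
  have hdvdp : ∀ p : ℕ, p.Prime → (p:ℤ)^((n.factorial).factorization p) ∣ N := by
    intro p hp
    haveI : Fact p.Prime := ⟨hp⟩
    set V : ℕ := (n.factorial).factorization p with hVdef
    have hVpad : V = padicValNat p (n.factorial) := Nat.factorization_def _ hp
    by_cases hpa : p ∣ a
    · apply Finset.dvd_sum
      intro k hk
      have hk' : k < n := mem_range.mp hk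
      have hQdvd : (k+1).factorial ∣ n.factorial := Nat.factorial_dvd_factorial (by omega)
      set Q : ℕ := n.factorial / (k+1).factorial with hQdef
      have hQ0 : Q ≠ 0 := Nat.div_ne_zero_iff.mpr ⟨(k+1).factorial_ne_zero, Nat.le_of_dvd (Nat.factorial_pos n) hQdvd⟩
      have hfac : n.factorial = (k+1).factorial * Q := (Nat.mul_div_cancel' hQdvd).symm
      have hw : ((k+1).factorial).factorization p ≤ n - 1 + k := by
        have hleg := sub_one_mul_padicValNat_factorial (p := p) (k+1)
        have h1 : ((k+1).factorial).factorization p = padicValNat p ((k+1).factorial) :=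
          Nat.factorization_def _ hp
        have hple : padicValNat p ((k+1).factorial) ≤ (p-1) * padicValNat p ((k+1).factorial) :=
          Nat.le_mul_of_pos_left _ (by have := hp.two_le; omega)
        omega
      have hVsplit : V = ((k+1).factorial).factorization p + Q.factorization p := by
        rw [hVdef]
        conv_lhs => rw [hfac]
        rw [Nat.factorization_mul (Nat.factorial_ne_zero _) hQ0]
        simp
      have hnat : p^V ∣ Q * a^(n-1+k) := by
        have h1 : p^(Q.factorization p) ∣ Q := Nat.ordProj_dvd Q p
        have h2 : p^(((k+1).factorial).factorization p) ∣ a^(n-1+k) :=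
          dvd_trans (pow_dvd_pow p hw) (pow_dvd_pow_of_dvd hpa _)
        calc p^V = p^(Q.factorization p) * p^(((k+1).factorial).factorization p) := by
              rw [hVsplit, add_comm, pow_add]
          _ ∣ Q * a^(n-1+k) := mul_dvd_mul h1 h2
      have hint : (p:ℤ)^V ∣ (Q : ℤ) * (a:ℤ)^(n-1+k) := by exact_mod_cast hnat
      have : c k * (a:ℤ)^(n-1+k) = ((n.choose k : ℤ) * bfun k) * ((Q:ℤ) * (a:ℤ)^(n-1+k)) := by
        rw [hcdef]; ring
      rw [this]
      exact Dvd.dvd.mul_left hint _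
    · -- p does not divide a
      set M : ℕ := p ^ V with hMdef
      haveI : NeZero M := ⟨pow_ne_zero _ hp.ne_zero⟩
      have hcop : a.Coprime M := ((hp.coprime_iff_not_dvd.mpr hpa).symm).pow_right V
      set y : ℕ := ((a : ZMod M)⁻¹).val with hydef
      have hone : ((a : ZMod M) * ((y:ℕ) : ZMod M)) = 1 := by
        rw [hydef, ZMod.natCast_val, ZMod.cast_id]
        exact ZMod.coe_mul_inv_eq_one a hcop
      have hmod : (M:ℤ) ∣ ((a:ℤ) * (y:ℤ) - 1) := by
        have h1 : ((a*y : ℕ) : ZMod M) = ((1:ℕ) : ZMod M) := by push_cast [hone]; simp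
        have h2 : (a*y) ≡ 1 [MOD M] := (ZMod.natCast_eq_natCast_iff _ _ _).mp h1
        have h3 := h2.dvd
        have : -((1:ℤ) - (a*y : ℕ)) = (a:ℤ)*(y:ℤ) - 1 := by push_cast; ring
        rw [← this]
        exact dvd_neg.mpr h3
      set T : ℤ := (n:ℤ) * ∑ i ∈ range y, (i:ℤ)^(n-1) with hTdef
      have hSy : (∑ k ∈ range n, c k * (y:ℤ)^(n-k)) = (n.factorial : ℤ) * T := by
        have hfaul := sum_range_pow y (n-1)
        have hn1 : n - 1 + 1 = n := by omega
        rw [hn1] at hfaul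
        rw [show ((n-1 : ℕ):ℚ) + 1 = (n:ℚ) by rw [Nat.cast_sub (by omega : 1 ≤ n)]; push_cast; ring] at hfaul
        -- hfaul : ∑ i in range y, (i:ℚ)^(n-1) = ∑ k in range n, bernoulli k * (n.choose k) * y^(n-k) / n
        have hQ : ((∑ k ∈ range n, c k * (y:ℤ)^(n-k) : ℤ) : ℚ)
            = (((n.factorial : ℤ) * T : ℤ) : ℚ) := by
          rw [Int.cast_sum]
          have hrw : ∀ k ∈ range n, ((c k * (y:ℤ)^(n-k) : ℤ) : ℚ)
              = (n.factorial : ℚ) * ((n:ℚ) * (bernoulli k * (n.choose k) * (y:ℚ)^(n-k) / n)) := by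
            intro k hk
            have hn0 : (n:ℚ) ≠ 0 := Nat.cast_ne_zero.mpr (by omega)
            rw [Int.cast_mul, Int.cast_pow, Int.cast_natCast, hc k (mem_range.mp hk)]
            field_simp
          rw [Finset.sum_congr rfl hrw, ← Finset.mul_sum, ← Finset.mul_sum, ← hfaul]
          push_cast [hTdef]
          ring
        exact_mod_cast hQ
      have hdiff : (M:ℤ) ∣ (N - (a:ℤ)^(2*n-1) * (∑ k ∈ range n, c k * (y:ℤ)^(n-k))) := by
        rw [hNdef, Finset.mul_sum, ← Finset.sum_sub_distrib]
        apply Finset.dvd_sum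
        intro k hk
        have hk' : k < n := mem_range.mp hk
        have hexp : (a:ℤ)^(2*n-1) * (c k * (y:ℤ)^(n-k))
            = c k * ((a:ℤ)^(n-1+k) * ((a:ℤ)*(y:ℤ))^(n-k)) := by
          have he : (n-1+k) + (n-k) = 2*n-1 := by omega
          rw [mul_pow, ← mul_assoc ((a:ℤ)^(n-1+k)), ← pow_add, he]
          ring
        rw [hexp]
        have hre : c k * (a:ℤ)^(n-1+k) - c k * ((a:ℤ)^(n-1+k) * ((a:ℤ)*(y:ℤ))^(n-k))
            = (c k * (a:ℤ)^(n-1+k)) * -(((a:ℤ)*(y:ℤ))^(n-k) - 1^(n-k)) := by ring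
        rw [hre]
        exact Dvd.dvd.mul_left (dvd_neg.mpr (dvd_trans hmod (sub_dvd_pow_sub_pow _ 1 _))) _
      have hMN : (M:ℤ) ∣ N := by
        have h2 : (M:ℤ) ∣ (a:ℤ)^(2*n-1) * (∑ k ∈ range n, c k * (y:ℤ)^(n-k)) := by
          rw [hSy]
          have hMf : (M:ℤ) ∣ (n.factorial : ℤ) := by
            have : (p:ℕ)^V ∣ n.factorial := by
              rw [hVpad]; exact pow_padicValNat_dvd
            exact_mod_cast Int.natCast_dvd_natCast.mpr this
          exact Dvd.dvd.mul_left (hMf.mul_right T) _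
        have := dvd_add hdiff h2
        simpa using this
      have : ((M:ℕ) : ℤ) = (p:ℤ)^V := by push_cast [hMdef]; ring
      rwa [this] at hMN
  -- n! divides N
  have hfd : (n.factorial : ℤ) ∣ N := by
    rcases eq_or_ne N 0 with h0 | h0
    · simp [h0]
    rw [← Int.natAbs_dvd_natAbs]
    simp only [Int.natAbs_natCast]
    rw [← Nat.factorization_le_iff_dvd (Nat.factorial_ne_zero n) (Int.natAbs_ne_zero.mpr h0)]
    rw [Finsupp.le_def]
    intro p
    by_cases hp : p.Prime
    · rw [← Nat.Prime.pow_dvd_iff_le_factorization hp (Int.natAbs_ne_zero.mpr h0)]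
      have := hdvdp p hp
      rwa [← Int.natAbs_dvd_natAbs, Int.natAbs_pow, Int.natAbs_natCast] at this
    · simp [Nat.factorization_eq_zero_of_not_prime _ hp]
  obtain ⟨t, ht⟩ := hfd
  refine ⟨t, ?_⟩
  have hfne : (n.factorial : ℚ) ≠ 0 := by exact_mod_cast n.factorial_ne_zero
  have : (n.factorial : ℚ) * ((a:ℚ)^(n-1) * ∑ k ∈ range n, (n.choose k : ℚ) * (a:ℚ)^k * bernoulli k)
      = (n.factorial : ℚ) * (t : ℚ) := by
    rw [← hNQ, ht]
    push_cast
    ring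
  exact mul_left_cancel₀ hfne this

theorem pow_mul_genGenocchi_isInt (a n : ℕ) (ha : 2 ≤ a) (hn : 0 < n) :
    ∃ m : ℤ, (a : ℚ) ^ (n - 1) * genGenocchi n a = (m : ℚ) := by
  rw [genGenocchi_eq n a (by omega)]
  rcases Nat.lt_or_ge n 2 with h2 | h2
  · interval_cases n
    refine ⟨1, ?_⟩
    simp
  · exact key_arith a n ha h2
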